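/- Let L be an even lattice of signature (2,n), let D be the exponent of A_L, and let r ∈ L be a stably reflective vector, i.e. r is primitive, (r,r) < 0, and σ_r or −σ_r lies in Õ(L). Assume it is not the case that D = 4, (r,r) = −4 and div(r) = 2. Let K_r = {x ∈ L : (x,r) = 0}, an even lattice with the restricted form. Then every φ ∈ Õ(L) with φ(K_r) = K_r restricts on K_r to an element of Õ(K_r); that is, the ℚ-linear extension of φ satisfies φ(y) − y ∈ K_r for every y ∈ K_r^∨. -/

import Mathlib

/-! Since `φ` preserves `K_r`, it preserves `K_r^⊥ = ℚ r`, so `φ r = ± r`. Choose `l₀ ∈ L` with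
`(r, l₀) = s = div(r)` and put `c = (y, l₀) / s`; for `y ∈ K_r^∨` the vector `w = y - c r` lies
in `L^∨`, and `φ y - y = (φ w - w) + c (φ r - r)`. So only `φ r = -r` needs work, where it
remains to show `2c r ∈ L`. If `σ_r ∈ Õ(L)` this is `σ_r w - w`. If `-σ_r ∈ Õ(L)`, then
`-σ_r w - w = -2y` gives `2y ∈ L`, stability of `φ` at `r/s ∈ L^∨` gives `s ∣ 2`, and
`σ_r(L) ⊆ L` gives `(r,r) ∈ {-s, -2s}`. In each case `2c ∈ ℤ`, except for `s = 2, (r,r) = -4`;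
there `-σ_r ∈ Õ(L)` makes `4` kill `A_L`, so `D ∣ 4`, and `D ≠ 4` yields `2w ∈ L`. -/

/-- The dual lattice `L^∨ = {y ∈ L ⊗ ℚ : (y,l) ∈ ℤ for all l ∈ L}`, viewed inside the
ambient rational vector space `V` (which plays the role of `L ⊗ ℚ`). -/
def DualSet {V : Type} [AddCommGroup V] [Module ℚ V]
    (B : V →ₗ[ℚ] V →ₗ[ℚ] ℚ) (L : Submodule ℤ V) : Set V :=
  {y : V | ∀ l ∈ L, ∃ a : ℤ, B y l = (a : ℚ)}

/-- `L` is a (full, integral, nondegenerate, symmetric) lattice in the rational vector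
space `V` with respect to the bilinear form `B`:  it is finitely generated, spans `V`
over `ℚ`, the form is symmetric, nondegenerate, and `ℤ`-valued on `L`. -/
def IsIntLattice {V : Type} [AddCommGroup V] [Module ℚ V]
    (B : V →ₗ[ℚ] V →ₗ[ℚ] ℚ) (L : Submodule ℤ V) : Prop :=
  L.FG ∧ Submodule.span ℚ (L : Set V) = ⊤ ∧
    (∀ x y : V, B x y = B y x) ∧
    (∀ x : V, (∀ y : V, B x y = 0) → x = 0) ∧
    (∀ x ∈ L, ∀ y ∈ L, ∃ a : ℤ, B x y = (a : ℚ))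

/-- The lattice is even: `(x,x) ∈ 2ℤ` for all `x ∈ L`. -/
def IsEvenLat {V : Type} [AddCommGroup V] [Module ℚ V]
    (B : V →ₗ[ℚ] V →ₗ[ℚ] ℚ) (L : Submodule ℤ V) : Prop :=
  ∀ x ∈ L, ∃ a : ℤ, B x x = 2 * (a : ℚ)

/-- The form `B` has signature `(2,n)`: it diagonalizes with exactly `2` positive and
`n` negative diagonal entries. -/
def HasSignatureTwo {V : Type} [AddCommGroup V] [Module ℚ V]
    (B : V →ₗ[ℚ] V →ₗ[ℚ] ℚ) (n : ℕ) : Prop :=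
  ∃ b : Module.Basis (Fin (2 + n)) ℚ V,
    (∀ i j, i ≠ j → B (b i) (b j) = 0) ∧
    Nat.card {i : Fin (2 + n) // 0 < B (b i) (b i)} = 2 ∧
    Nat.card {i : Fin (2 + n) // B (b i) (b i) < 0} = n

/-- `r` is a primitive vector of `L`: `ℚr ∩ L = ℤr`. -/
def IsPrimitiveVec {V : Type} [AddCommGroup V] [Module ℚ V]
    (L : Submodule ℤ V) (r : V) : Prop :=
  r ∈ L ∧ ∀ x ∈ L, (∃ q : ℚ, x = q • r) → ∃ a : ℤ, x = a • r

/-- The reflection `σ_r : l ↦ l − (2(l,r)/(r,r))·r` on `V = L ⊗ ℚ`. -/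
def reflVec {V : Type} [AddCommGroup V] [Module ℚ V]
    (B : V →ₗ[ℚ] V →ₗ[ℚ] ℚ) (r : V) (l : V) : V :=
  l - (2 * B l r / B r r) • r

/-- `s` is the divisor `div(r)` of `r`: the positive generator of the ideal
`{(r,l) : l ∈ L} ⊆ ℤ`. -/
def IsDivOf {V : Type} [AddCommGroup V] [Module ℚ V]
    (B : V →ₗ[ℚ] V →ₗ[ℚ] ℚ) (L : Submodule ℤ V) (r : V) (s : ℤ) : Prop :=
  0 < s ∧ (∀ l ∈ L, ∃ a : ℤ, B r l = ((s * a : ℤ) : ℚ)) ∧ ∃ l ∈ L, B r l = (s : ℚ)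

/-- `D` is the exponent of the (finite abelian) discriminant group `A_L = L^∨/L`:
the smallest positive integer annihilating `L^∨/L` (characterized by dividing every
positive annihilator). -/
def IsExponentOf {V : Type} [AddCommGroup V] [Module ℚ V]
    (B : V →ₗ[ℚ] V →ₗ[ℚ] ℚ) (L : Submodule ℤ V) (D : ℤ) : Prop :=
  0 < D ∧ (∀ y ∈ DualSet B L, D • y ∈ L) ∧
    ∀ D' : ℤ, 0 < D' → (∀ y ∈ DualSet B L, D' • y ∈ L) → D ∣ D'

section

variable {V : Type} [AddCommGroup V] [Module ℚ V] {B : V →ₗ[ℚ] V →ₗ[ℚ] ℚ} {L : Submodule ℤ V}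
  {r : V}

lemma intCast_smul_mem (a : ℤ) {v : V} (hv : v ∈ L) : (a : ℚ) • v ∈ L := by
  rw [Int.cast_smul_eq_zsmul]
  exact L.smul_mem a hv

lemma IsPrimitiveVec.exists_eq_intCast_of_smul_mem (hprim : IsPrimitiveVec L r) (hr : r ≠ 0)
    {q : ℚ} (h : q • r ∈ L) : ∃ a : ℤ, q = a := by
  obtain ⟨a, ha⟩ := hprim.2 _ h ⟨q, rfl⟩
  rw [← Int.cast_smul_eq_zsmul ℚ] at ha
  exact ⟨a, smul_left_injective ℚ hr ha⟩

lemma apply_eq_zero_of_mem_span_orth {v : V}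
    (hv : v ∈ Submodule.span ℚ {x : V | x ∈ L ∧ B x r = 0}) : B v r = 0 :=
  (Submodule.span_le (p := LinearMap.ker (B.flip r)) |>.mpr fun _ hx => hx.2) hv

lemma eq_smul_of_forall_orth_apply_eq_zero (hspan : Submodule.span ℚ (L : Set V) = ⊤)
    (hsym : ∀ x y : V, B x y = B y x) (hnondeg : ∀ x : V, (∀ y : V, B x y = 0) → x = 0)
    (hint : ∀ x ∈ L, ∀ y ∈ L, ∃ a : ℤ, B x y = (a : ℚ)) (hr : r ∈ L) (hrr : B r r ≠ 0)
    {u : V} (hu : ∀ k ∈ L, B k r = 0 → B u k = 0) : u = (B u r / B r r) • r := by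
  have hfun : B (u - (B u r / B r r) • r) = 0 := LinearMap.ext_on hspan fun l hl => by
    obtain ⟨a, ha⟩ := hint r hr r hr
    obtain ⟨b, hb⟩ := hint l hl r hr
    -- `(r,r) l - (l,r) r` is an element of `L` orthogonal to `r`
    have h := hu _ (L.sub_mem (intCast_smul_mem a hl) (intCast_smul_mem b hr)) (by
      simp only [map_sub, map_smul, LinearMap.sub_apply, LinearMap.smul_apply, smul_eq_mul,
        ← ha, ← hb]
      ring)
    simp only [map_sub, map_smul, smul_eq_mul, ← ha, ← hb] at h
    simp only [map_sub, map_smul, LinearMap.sub_apply, LinearMap.smul_apply, smul_eq_mul,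
      LinearMap.zero_apply, hsym r l]
    field_simp
    linarith
  exact sub_eq_zero.mp (hnondeg _ fun v => by rw [hfun]; rfl)

lemma apply_eq_self_or_neg (hspan : Submodule.span ℚ (L : Set V) = ⊤)
    (hsym : ∀ x y : V, B x y = B y x) (hnondeg : ∀ x : V, (∀ y : V, B x y = 0) → x = 0)
    (hint : ∀ x ∈ L, ∀ y ∈ L, ∃ a : ℤ, B x y = (a : ℚ)) (hr : r ∈ L) (hrr : B r r ≠ 0)
    {φ : V →ₗ[ℚ] V} (hφiso : ∀ x ∈ L, ∀ y ∈ L, B (φ x) (φ y) = B x y)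
    (hφK : φ '' {x : V | x ∈ L ∧ B x r = 0} = {x : V | x ∈ L ∧ B x r = 0}) :
    φ r = r ∨ φ r = -r := by
  have hφr : φ r = (B (φ r) r / B r r) • r :=
    eq_smul_of_forall_orth_apply_eq_zero hspan hsym hnondeg hint hr hrr fun k hk hkr => by
      obtain ⟨x, ⟨hxL, hxr⟩, rfl⟩ : k ∈ φ '' {x : V | x ∈ L ∧ B x r = 0} :=
        by rw [hφK]; exact ⟨hk, hkr⟩
      rw [hφiso r hr x hxL, hsym, hxr]
  set μ := B (φ r) r / B r r
  have hμ : μ * μ = 1 := by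
    have h := hφiso r hr r hr
    rw [hφr, map_smul, map_smul, LinearMap.smul_apply, smul_eq_mul, smul_eq_mul,
      ← mul_assoc] at h
    exact mul_right_cancel₀ hrr (h.trans (one_mul _).symm)
  rcases mul_self_eq_one_iff.mp hμ with h | h <;> simp [hφr, h]

lemma sub_smul_mem_orth (hsym : ∀ x y : V, B x y = B y x) {s a : ℤ} {l₀ l : V}
    (hl₀L : l₀ ∈ L) (hl₀ : B r l₀ = s) (hl : l ∈ L) (ha : B r l = (s * a : ℤ)) :
    l - (a : ℚ) • l₀ ∈ ({x : V | x ∈ L ∧ B x r = 0} : Set V) := by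
  refine ⟨L.sub_mem hl (intCast_smul_mem a hl₀L), ?_⟩
  rw [map_sub, map_smul, LinearMap.sub_apply, LinearMap.smul_apply, smul_eq_mul, hsym l,
    hsym l₀, ha, hl₀]
  push_cast
  ring

lemma sub_div_smul_mem_dualSet (hsym : ∀ x y : V, B x y = B y x) {s : ℤ}
    (hs : IsDivOf B L r s) {l₀ : V} (hl₀L : l₀ ∈ L) (hl₀ : B r l₀ = s) {y : V}
    (hyK : ∀ k ∈ ({x : V | x ∈ L ∧ B x r = 0} : Set V), ∃ a : ℤ, B y k = (a : ℚ)) :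
    y - (B y l₀ / s) • r ∈ DualSet B L := by
  intro l hl
  obtain ⟨a, ha⟩ := hs.2.1 l hl
  obtain ⟨b, hb⟩ := hyK _ (sub_smul_mem_orth hsym hl₀L hl₀ hl ha)
  refine ⟨b, ?_⟩
  have hs0 : (s : ℚ) ≠ 0 := by exact_mod_cast hs.1.ne'
  rw [map_sub, map_smul] at hb
  rw [map_sub, map_smul, LinearMap.sub_apply, LinearMap.smul_apply, smul_eq_mul, ha, ← hb,
    smul_eq_mul]
  push_cast
  field_simp

lemma reflVec_sub_smul (hrr : B r r ≠ 0) {y : V} (hyr : B y r = 0) (t : ℚ) :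
    reflVec B r (y - t • r) = y + t • r := by
  unfold reflVec
  rw [map_sub, map_smul, LinearMap.sub_apply, LinearMap.smul_apply, smul_eq_mul, hyr,
    zero_sub, mul_neg, neg_div, ← mul_assoc, mul_div_cancel_right₀ _ hrr]
  module

lemma IsDivOf.inv_smul_mem_dualSet {s : ℤ} (hs : IsDivOf B L r s) :
    (s : ℚ)⁻¹ • r ∈ DualSet B L := by
  intro l hl
  obtain ⟨a, ha⟩ := hs.2.1 l hl
  have hs0 : (s : ℚ) ≠ 0 := by exact_mod_cast hs.1.ne'
  refine ⟨a, ?_⟩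
  rw [map_smul, LinearMap.smul_apply, smul_eq_mul, ha]
  push_cast
  field_simp

lemma IsDivOf.eq_one_or_two_of_apply_eq_neg {s : ℤ} (hs : IsDivOf B L r s)
    (hprim : IsPrimitiveVec L r) (hr : r ≠ 0) {φ : V →ₗ[ℚ] V}
    (hφstab : ∀ y ∈ DualSet B L, φ y - y ∈ L) (hφr : φ r = -r) : s = 1 ∨ s = 2 := by
  have hs0 : (s : ℚ) ≠ 0 := by exact_mod_cast hs.1.ne'
  have h := hφstab _ hs.inv_smul_mem_dualSet
  rw [map_smul, hφr, smul_neg, ← neg_add', ← two_smul ℚ, smul_smul, ← neg_smul] at h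
  obtain ⟨a, ha⟩ := hprim.exists_eq_intCast_of_smul_mem hr h
  have hsa : s * (-a) = 2 := by
    have : (s : ℚ) * (-a) = 2 := by rw [← ha]; field_simp
    exact_mod_cast this
  have := Int.le_of_dvd two_pos ⟨-a, hsa.symm⟩
  have := hs.1
  omega

lemma IsDivOf.self_eq_neg_or_neg_two_mul {s : ℤ} (hs : IsDivOf B L r s)
    (hsym : ∀ x y : V, B x y = B y x) (hprim : IsPrimitiveVec L r) (hr : r ≠ 0)
    (hneg : B r r < 0) (hσ : ∀ l ∈ L, reflVec B r l ∈ L) : B r r = -s ∨ B r r = -2 * s := by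
  obtain ⟨l₀, hl₀L, hl₀⟩ := hs.2.2
  obtain ⟨a₁, ha₁⟩ := hs.2.1 r hprim.1
  have h : (2 * s / B r r) • r ∈ L := by
    have e : (2 * s / B r r) • r = l₀ - reflVec B r l₀ := by
      rw [reflVec, hsym l₀, hl₀, sub_sub_cancel]
    exact e ▸ L.sub_mem hl₀L (hσ l₀ hl₀L)
  obtain ⟨a₂, ha₂⟩ := hprim.exists_eq_intCast_of_smul_mem hr h
  have hprod : a₁ * a₂ = 2 := by
    have hs0 : (s : ℚ) ≠ 0 := by exact_mod_cast hs.1.ne'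
    rw [ha₁, div_eq_iff (by rw [← ha₁]; exact hneg.ne)] at ha₂
    push_cast at ha₂
    have : (s : ℚ) * (a₁ * a₂) = s * 2 := by linear_combination -ha₂
    exact_mod_cast mul_left_cancel₀ hs0 this
  have ha₁neg : a₁ < 0 := by
    have hsa : s * a₁ < 0 := by exact_mod_cast ha₁ ▸ hneg
    exact neg_of_mul_neg_right hsa hs.1.le
  have : a₁ = -1 ∨ a₁ = -2 := by
    have := Int.le_of_dvd two_pos (⟨-a₂, by linarith⟩ : -a₁ ∣ 2)
    omega
  rcases this with rfl | rfl
  · left; rw [ha₁]; push_cast; ring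
  · right; rw [ha₁]; push_cast; ring

lemma four_smul_mem_of_neg_reflVec_mem (hr : r ∈ L) (hrr : B r r = -4)
    (hσ : ∀ y ∈ DualSet B L, -(reflVec B r y) - y ∈ L) {v : V} (hv : v ∈ DualSet B L) :
    (4 : ℤ) • v ∈ L := by
  obtain ⟨a, ha⟩ := hv r hr
  have e : (4 : ℤ) • v = (-2 : ℤ) • (-(reflVec B r v) - v) - (a : ℚ) • r := by
    rw [reflVec, ha, hrr, ← Int.cast_smul_eq_zsmul ℚ, ← Int.cast_smul_eq_zsmul ℚ]
    push_cast
    module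
  rw [e]
  exact L.sub_mem (L.smul_mem _ (hσ v hv)) (intCast_smul_mem a hr)

lemma IsExponentOf.two_smul_mem {D : ℤ} (hD : IsExponentOf B L D)
    (h4 : ∀ v ∈ DualSet B L, (4 : ℤ) • v ∈ L) (hD4 : D ≠ 4) {v : V} (hv : v ∈ DualSet B L) :
    (2 : ℤ) • v ∈ L := by
  have hdvd := hD.2.2 4 (by norm_num) h4
  have hle := Int.le_of_dvd (by norm_num) hdvd
  have hD2 : D ∣ 2 := by
    have := hD.1
    interval_cases D <;> omega
  obtain ⟨k, hk⟩ := hD2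
  rw [hk, mul_comm, mul_smul]
  exact L.smul_mem k (hD.2.1 v hv)

lemma two_mul_div_smul_mem_of_neg_reflVec (hsym : ∀ x y : V, B x y = B y x)
    (hint : ∀ x ∈ L, ∀ y ∈ L, ∃ a : ℤ, B x y = (a : ℚ)) (hprim : IsPrimitiveVec L r)
    (hneg : B r r < 0) {s : ℤ} (hs : IsDivOf B L r s) (hs12 : s = 1 ∨ s = 2)
    {l₀ : V} (hl₀L : l₀ ∈ L) (hl₀ : B r l₀ = s) {y : V} (hyr : B y r = 0)
    (hyK : ∀ k ∈ ({x : V | x ∈ L ∧ B x r = 0} : Set V), ∃ a : ℤ, B y k = (a : ℚ))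
    (hσL : ∀ l ∈ L, -(reflVec B r l) ∈ L) (hσ : ∀ y ∈ DualSet B L, -(reflVec B r y) - y ∈ L)
    {D : ℤ} (hD : IsExponentOf B L D) (hexc : ¬(D = 4 ∧ B r r = -4 ∧ s = 2)) :
    (2 * (B y l₀ / s)) • r ∈ L := by
  have hr : r ≠ 0 := by rintro rfl; simp at hneg
  set c := B y l₀ / s
  have hw := sub_div_smul_mem_dualSet hsym hs hl₀L hl₀ hyK
  have h2y : (2 : ℚ) • y ∈ L := by
    have h := hσ _ hw
    rw [reflVec_sub_smul hneg.ne hyr,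
      show -(y + c • r) - (y - c • r) = -((2 : ℚ) • y) by module] at h
    exact neg_mem_iff.mp h
  rcases hs12 with rfl | rfl
  · obtain ⟨a, ha⟩ := hint _ h2y l₀ hl₀L
    have : 2 * c = a := by simp [← ha, c]
    exact this ▸ intCast_smul_mem a hprim.1
  rcases hs.self_eq_neg_or_neg_two_mul hsym hprim hr hneg
    (fun l hl => neg_mem_iff.mp (hσL l hl)) with hrr | hrr
  · obtain ⟨a, ha⟩ := hyK _ (sub_smul_mem_orth hsym hl₀L hl₀ hprim.1 (a := -1)
      (by rw [hrr]; push_cast; ring))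
    have : 2 * c = a := by rw [← ha, map_sub, map_smul, hyr, smul_eq_mul]; push_cast; ring
    exact this ▸ intCast_smul_mem a hprim.1
  · have h2w := hD.two_smul_mem
      (fun v hv => four_smul_mem_of_neg_reflVec_mem hprim.1 (by rw [hrr]; norm_num) hσ hv)
      (fun h => hexc ⟨h, by rw [hrr]; norm_num, rfl⟩) hw
    have e : (2 * c) • r = (2 : ℚ) • y - (2 : ℤ) • (y - c • r) := by
      rw [two_zsmul, two_smul]
      module
    exact e ▸ L.sub_mem h2y h2w

end

theorem restriction_to_orthogonal_complement_is_stable_general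
    {V : Type} [AddCommGroup V] [Module ℚ V]
    (B : V →ₗ[ℚ] V →ₗ[ℚ] ℚ) (L : Submodule ℤ V)
    (hlat : IsIntLattice B L)
    (D : ℤ) (hD : IsExponentOf B L D)
    (r : V) (hprim : IsPrimitiveVec L r) (hneg : B r r < 0)
    -- `r` is stably reflective: `σ_r` or `−σ_r` maps `L` into itself and lies in `Õ(L)`:
    (hrefl : ((∀ l ∈ L, reflVec B r l ∈ L) ∧
                ∀ y ∈ DualSet B L, reflVec B r y - y ∈ L) ∨
             ((∀ l ∈ L, -(reflVec B r l) ∈ L) ∧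
                ∀ y ∈ DualSet B L, -(reflVec B r y) - y ∈ L))
    (s : ℤ) (hs : IsDivOf B L r s)
    -- excluded case: `D = 4`, `(r,r) = −4`, `div(r) = 2`:
    (hexc : ¬(D = 4 ∧ B r r = -4 ∧ s = 2))
    (φ : V →ₗ[ℚ] V)
    -- `φ ∈ Õ(L)`:
    (hφiso : ∀ x ∈ L, ∀ y ∈ L, B (φ x) (φ y) = B x y)
    (hφstab : ∀ y ∈ DualSet B L, φ y - y ∈ L)
    -- `φ(K_r) = K_r`:
    (hφK : φ '' {x : V | x ∈ L ∧ B x r = 0} = {x : V | x ∈ L ∧ B x r = 0}) :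
    -- conclusion: `φ(y) − y ∈ K_r` for every `y ∈ K_r^∨ ⊆ K_r ⊗ ℚ`:
    ∀ y ∈ Submodule.span ℚ {x : V | x ∈ L ∧ B x r = 0},
      (∀ k ∈ ({x : V | x ∈ L ∧ B x r = 0} : Set V), ∃ a : ℤ, B y k = (a : ℚ)) →
        φ y - y ∈ {x : V | x ∈ L ∧ B x r = 0} := by
  intro y hy hyK
  obtain ⟨-, hspan, hsym, hnondeg, hint⟩ := hlat
  have hr : r ≠ 0 := by rintro rfl; simp at hneg
  have hyr : B y r = 0 := apply_eq_zero_of_mem_span_orth hy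
  have hφyr : B (φ y) r = 0 :=
    apply_eq_zero_of_mem_span_orth (hφK ▸ Submodule.apply_mem_span_image_of_mem_span φ hy)
  refine ⟨?_, by simp [hyr, hφyr]⟩
  obtain ⟨l₀, hl₀L, hl₀⟩ := hs.2.2
  set c := B y l₀ / s
  have hw := sub_div_smul_mem_dualSet hsym hs hl₀L hl₀ hyK
  have hφw := hφstab _ hw
  rcases apply_eq_self_or_neg hspan hsym hnondeg hint hprim.1 hneg.ne hφiso hφK with hφr | hφr
  · simpa [hφr] using hφw
  suffices (2 * c) • r ∈ L by
    have e : φ y - y = (φ (y - c • r) - (y - c • r)) - (2 * c) • r := by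
      rw [map_sub, map_smul, hφr]
      module
    exact e ▸ L.sub_mem hφw this
  rcases hrefl with ⟨-, hσ⟩ | ⟨hσL, hσ⟩
  · have h := hσ _ hw
    rw [reflVec_sub_smul hneg.ne hyr] at h
    exact (by module : y + c • r - (y - c • r) = (2 * c) • r) ▸ h
  exact two_mul_div_smul_mem_of_neg_reflVec hsym hint hprim hneg hs
    (hs.eq_one_or_two_of_apply_eq_neg hprim hr hφstab hφr) hl₀L hl₀ hyr hyK hσL hσ hD hexc

/-- Let `L` be an even lattice of signature `(2,n)`, `D` the exponent of
`A_L`, and `r ∈ L` a stably reflective vector (primitive, `(r,r) < 0`, and `σ_r` or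
`−σ_r` lies in `Õ(L)`).  Assume it is not the case that `D = 4`, `(r,r) = −4` and
`div(r) = 2`.  Let `K_r = {x ∈ L : (x,r) = 0}`.  Then every `φ ∈ Õ(L)` with
`φ(K_r) = K_r` restricts on `K_r` to an element of `Õ(K_r)`: the `ℚ`-linear extension of
`φ` satisfies `φ(y) − y ∈ K_r` for every `y ∈ K_r^∨`. -/
theorem restriction_to_orthogonal_complement_is_stable
    {V : Type} [AddCommGroup V] [Module ℚ V]
    (B : V →ₗ[ℚ] V →ₗ[ℚ] ℚ) (L : Submodule ℤ V) (n : ℕ)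
    (hlat : IsIntLattice B L) (heven : IsEvenLat B L) (hsig : HasSignatureTwo B n)
    (D : ℤ) (hD : IsExponentOf B L D)
    (r : V) (hprim : IsPrimitiveVec L r) (hneg : B r r < 0)
    -- `r` is stably reflective: `σ_r` or `−σ_r` maps `L` into itself and lies in `Õ(L)`:
    (hrefl : ((∀ l ∈ L, reflVec B r l ∈ L) ∧
                ∀ y ∈ DualSet B L, reflVec B r y - y ∈ L) ∨
             ((∀ l ∈ L, -(reflVec B r l) ∈ L) ∧
                ∀ y ∈ DualSet B L, -(reflVec B r y) - y ∈ L))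
    (s : ℤ) (hs : IsDivOf B L r s)
    -- excluded case: `D = 4`, `(r,r) = −4`, `div(r) = 2`:
    (hexc : ¬(D = 4 ∧ B r r = -4 ∧ s = 2))
    (φ : V →ₗ[ℚ] V)
    -- `φ ∈ Õ(L)`:
    (hφbij : Set.BijOn φ (L : Set V) (L : Set V))
    (hφiso : ∀ x ∈ L, ∀ y ∈ L, B (φ x) (φ y) = B x y)
    (hφstab : ∀ y ∈ DualSet B L, φ y - y ∈ L)
    -- `φ(K_r) = K_r`:
    (hφK : φ '' {x : V | x ∈ L ∧ B x r = 0} = {x : V | x ∈ L ∧ B x r = 0}) :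
    -- conclusion: `φ(y) − y ∈ K_r` for every `y ∈ K_r^∨ ⊆ K_r ⊗ ℚ`:
    ∀ y ∈ Submodule.span ℚ {x : V | x ∈ L ∧ B x r = 0},
      (∀ k ∈ ({x : V | x ∈ L ∧ B x r = 0} : Set V), ∃ a : ℤ, B y k = (a : ℚ)) →
        φ y - y ∈ {x : V | x ∈ L ∧ B x r = 0} :=
  restriction_to_orthogonal_complement_is_stable_general B L hlat D hD r hprim hneg hrefl s hs hexc
    φ hφiso hφstab hφK
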